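/- arXiv:2007.13822 — 2 statements merged into one kernel-verified Lean document; each statement's English description precedes it below -/
import Mathlib

section
/- Let B and P be real Banach spaces, let U ⊆ P be an open set, let m ≥ 1 be a natural number, and let κ ≥ 1/5 be a real number. Suppose S : B → B is m-times continuously (Fréchet) differentiable with S(0) = 0 and satisfies ‖S(ξ₁) − S(ξ₂)‖ ≤ κ(‖ξ₁‖ + ‖ξ₂‖)·‖ξ₁ − ξ₂‖ for all ξ₁, ξ₂ in the closed unit ball of B, and suppose η : U → B is m-times continuously differentiable with ‖η(a)‖ < 1/(10κ) for all a ∈ U. Then there is an m-times continuously differentiable map ξ : U → B such that for every a ∈ U one has ‖ξ(a)‖ ≤ 1/(5κ) and ξ(a) + S(ξ(a)) = η(a); moreover ξ(a) is the unique element of the closed ball of radius 1/(5κ) solving this equation. -/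
/-!
Put `r = 1 / (5κ) ≤ 1`. On the closed `r`-ball the quadratic estimate makes `S` Lipschitz with
constant `2κr = 2/5`, and gives `‖η a - S x‖ < 1/(10κ) + κr² < r`; so `x ↦ η a - S x` is a
contraction of that ball, whose fixed point `ξ a` is the unique small solution and lies in the
open ball. There `x ↦ x + S x` has derivative `1 + DS(ξ a)` with `‖DS(ξ a)‖ ≤ 2/5`, which is
invertible, so by the inverse function theorem `ξ` agrees near `a` with the `C^m` local inverse
composed with `η`.
-/

open Set Metric Filter Topology NNReal

section LipschitzPerturbationOfIdentity

variable {E : Type*} [NormedAddCommGroup E] {S : E → E} {K : ℝ≥0} {s : Set E}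

theorem LipschitzOnWith.eq_of_add_eq_add (hS : LipschitzOnWith K S s) (hK : K < 1)
    {x y : E} (hx : x ∈ s) (hy : y ∈ s) (h : x + S x = y + S y) : x = y := by
  have hxy : x - y = S y - S x := by
    rw [sub_eq_sub_iff_add_eq_add, add_comm (S y)]; exact h
  have hle : ‖x - y‖ ≤ K * ‖x - y‖ := by
    simpa only [hxy, norm_sub_rev (S y), norm_sub_rev y] using hS.norm_sub_le hy hx
  have hK' : (K : ℝ) < 1 := hK
  have hnorm : ‖x - y‖ = 0 := by nlinarith [norm_nonneg (x - y)]
  exact sub_eq_zero.mp (norm_eq_zero.mp hnorm)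

theorem LipschitzOnWith.exists_add_eq [CompleteSpace E] (hS : LipschitzOnWith K S s)
    (hK : K < 1) (hs : IsClosed s) (hne : s.Nonempty) {b : E}
    (hmaps : MapsTo (fun x ↦ b - S x) s s) :
    ∃ x ∈ s, x + S x = b := by
  have hT : ContractingWith K (hmaps.restrict _ s s) := by
    refine ⟨hK, LipschitzWith.of_dist_le_mul fun x y ↦ ?_⟩
    simpa only [Subtype.dist_eq, MapsTo.val_restrict_apply, dist_sub_left]
      using hS.dist_le_mul x x.2 y y.2
  obtain ⟨x₀, hx₀⟩ := hne
  obtain ⟨x, hxs, hfix, -⟩ := hT.exists_fixedPoint' hs.isComplete hmaps hx₀ (edist_ne_top _ _)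
  exact ⟨x, hxs, (sub_eq_iff_eq_add.mp hfix).symm⟩

variable {𝕜 : Type*} [NontriviallyNormedField 𝕜] [NormedSpace 𝕜 E] [CompleteSpace E]

theorem LipschitzOnWith.exists_hasFDerivAt_id_add (hS : LipschitzOnWith K S s) (hK : K < 1)
    {x : E} (hs : s ∈ 𝓝 x) (hd : DifferentiableAt 𝕜 S x) :
    ∃ f' : E ≃L[𝕜] E, HasFDerivAt (fun y ↦ y + S y) (f' : E →L[𝕜] E) x := by
  have hnorm : ‖-fderiv 𝕜 S x‖ < 1 := by
    rw [norm_neg]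
    exact (hd.hasFDerivAt.le_of_lipschitzOn hs hS).trans_lt hK
  refine ⟨.ofUnit (Units.oneSub _ hnorm), ?_⟩
  have hval : (ContinuousLinearEquiv.ofUnit (Units.oneSub _ hnorm) : E →L[𝕜] E) =
      .id 𝕜 E + fderiv 𝕜 S x :=
    (Units.val_oneSub _ hnorm).trans (sub_neg_eq_add _ _)
  rw [hval]
  exact (hasFDerivAt_id x).add hd.hasFDerivAt

end LipschitzPerturbationOfIdentity

theorem contDiffAt_of_eventually_unique_solution {𝕂 : Type*} [RCLike 𝕂]
    {E F P : Type*} [NormedAddCommGroup E] [NormedSpace 𝕂 E] [CompleteSpace E]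
    [NormedAddCommGroup F] [NormedSpace 𝕂 F] [NormedAddCommGroup P] [NormedSpace 𝕂 P]
    {n : WithTop ℕ∞} {Φ : E → F} {f' : E ≃L[𝕂] F} {η : P → F} {ξ : P → E} {a₀ : P}
    {V : Set E} (hΦ : ContDiffAt 𝕂 n Φ (ξ a₀)) (hΦ' : HasFDerivAt Φ (f' : E →L[𝕂] F) (ξ a₀))
    (hn : n ≠ 0) (hη : ContDiffAt 𝕂 n η a₀) (hsol : Φ (ξ a₀) = η a₀) (hV : V ∈ 𝓝 (ξ a₀))
    (huniq : ∀ᶠ a in 𝓝 a₀, ∀ x ∈ V, Φ x = η a → x = ξ a) :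
    ContDiffAt 𝕂 n ξ a₀ := by
  set G := hΦ.localInverse hΦ' hn
  have hG : ContDiffAt 𝕂 n G (η a₀) := hsol ▸ hΦ.to_localInverse hΦ' hn
  have hGη : G (η a₀) = ξ a₀ := hsol ▸ hΦ.localInverse_apply_image hΦ' hn
  have hright : ∀ᶠ a in 𝓝 a₀, Φ (G (η a)) = η a :=
    hη.continuousAt.eventually (hsol ▸ (hΦ.hasStrictFDerivAt' hΦ' hn).eventually_right_inverse)
  have hmem : ∀ᶠ a in 𝓝 a₀, G (η a) ∈ V :=
    (hG.continuousAt.comp hη.continuousAt).preimage_mem_nhds (by rwa [Function.comp_apply, hGη])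
  refine (hG.comp a₀ hη).congr_of_eventuallyEq ?_
  filter_upwards [huniq, hright, hmem] with a ha hΦG hGV
  exact (ha _ hGV hΦG).symm

section QuadraticNonlinearity

variable {B : Type*} [NormedAddCommGroup B] {S : B → B} {κ : ℝ}

theorem lipschitzOnWith_closedBall_of_quadratic
    (hquad : ∀ ξ₁ ξ₂ : B, ‖ξ₁‖ ≤ 1 → ‖ξ₂‖ ≤ 1 →
      ‖S ξ₁ - S ξ₂‖ ≤ κ * (‖ξ₁‖ + ‖ξ₂‖) * ‖ξ₁ - ξ₂‖)
    (hκ : 0 ≤ κ) {r : ℝ} (hr : r ≤ 1) {K : ℝ≥0} (hK : κ * (2 * r) ≤ K) :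
    LipschitzOnWith K S (closedBall 0 r) := by
  refine LipschitzOnWith.of_dist_le_mul fun x hx y hy ↦ ?_
  rw [mem_closedBall_zero_iff] at hx hy
  rw [dist_eq_norm, dist_eq_norm]
  calc ‖S x - S y‖ ≤ κ * (‖x‖ + ‖y‖) * ‖x - y‖ := hquad x y (hx.trans hr) (hy.trans hr)
    _ ≤ κ * (2 * r) * ‖x - y‖ := by gcongr; linarith
    _ ≤ K * ‖x - y‖ := by gcongr

theorem norm_sub_apply_lt_of_quadratic
    (hquad : ∀ ξ₁ ξ₂ : B, ‖ξ₁‖ ≤ 1 → ‖ξ₂‖ ≤ 1 →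
      ‖S ξ₁ - S ξ₂‖ ≤ κ * (‖ξ₁‖ + ‖ξ₂‖) * ‖ξ₁ - ξ₂‖)
    (hκ : 1 / 5 ≤ κ) (hS0 : S 0 = 0) {b x : B} (hb : ‖b‖ < 1 / (10 * κ))
    (hx : ‖x‖ ≤ 1 / (5 * κ)) : ‖b - S x‖ < 1 / (5 * κ) := by
  have hκ0 : 0 < κ := by linarith
  have hx1 : ‖x‖ ≤ 1 := hx.trans <| (div_le_one (by positivity)).2 (by linarith)
  have hSx : ‖S x‖ ≤ κ * ‖x‖ * ‖x‖ := by
    simpa [hS0] using hquad x 0 hx1 (by simp)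
  calc ‖b - S x‖ ≤ ‖b‖ + ‖S x‖ := norm_sub_le _ _
    _ < 1 / (10 * κ) + κ * (1 / (5 * κ)) * (1 / (5 * κ)) :=
        add_lt_add_of_lt_of_le hb (hSx.trans (by gcongr))
    _ < 1 / (5 * κ) := by field_simp; norm_num

theorem exists_add_eq_of_quadratic [CompleteSpace B]
    (hquad : ∀ ξ₁ ξ₂ : B, ‖ξ₁‖ ≤ 1 → ‖ξ₂‖ ≤ 1 →
      ‖S ξ₁ - S ξ₂‖ ≤ κ * (‖ξ₁‖ + ‖ξ₂‖) * ‖ξ₁ - ξ₂‖)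
    (hκ : 1 / 5 ≤ κ) (hS0 : S 0 = 0) {K : ℝ≥0}
    (hlip : LipschitzOnWith K S (closedBall 0 (1 / (5 * κ)))) (hK : K < 1) {b : B}
    (hb : ‖b‖ < 1 / (10 * κ)) :
    ∃ x ∈ ball 0 (1 / (5 * κ)), x + S x = b := by
  have hsmall {x : B} (hx : x ∈ closedBall 0 (1 / (5 * κ))) :
      b - S x ∈ ball 0 (1 / (5 * κ)) :=
    mem_ball_zero_iff.2 <|
      norm_sub_apply_lt_of_quadratic hquad hκ hS0 hb (mem_closedBall_zero_iff.1 hx)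
  obtain ⟨x, hx, hxb⟩ := hlip.exists_add_eq hK isClosed_closedBall
    (nonempty_closedBall.2 (div_nonneg zero_le_one (by linarith)))
    fun x hx ↦ ball_subset_closedBall (hsmall hx)
  -- the solution lies in the open ball because it equals `b - S x`
  exact ⟨x, eq_sub_of_add_eq hxb ▸ hsmall hx, hxb⟩

end QuadraticNonlinearity

/-- Parametric addendum to the contraction-mapping lemma (Lemma 4.2 of the paper):
the unique small solution of `ξ + S ξ = η a` depends `C^m`-smoothly on the
parameter `a` ranging over an open set `U` of a real Banach space `P`. -/
theorem stmt1 {B P : Type*} [NormedAddCommGroup B] [NormedSpace ℝ B] [CompleteSpace B]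
    [NormedAddCommGroup P] [NormedSpace ℝ P]
    (U : Set P) (hU : IsOpen U) (m : ℕ) (hm : 1 ≤ m) (κ : ℝ) (hκ : 1 / 5 ≤ κ)
    (S : B → B) (hS : ContDiff ℝ m S) (hS0 : S 0 = 0)
    (hquad : ∀ ξ₁ ξ₂ : B, ‖ξ₁‖ ≤ 1 → ‖ξ₂‖ ≤ 1 →
      ‖S ξ₁ - S ξ₂‖ ≤ κ * (‖ξ₁‖ + ‖ξ₂‖) * ‖ξ₁ - ξ₂‖)
    (η : P → B) (hη : ContDiffOn ℝ m η U)
    (hηsmall : ∀ a ∈ U, ‖η a‖ < 1 / (10 * κ)) :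
    ∃ ξ : P → B, ContDiffOn ℝ m ξ U ∧
      ∀ a ∈ U, ‖ξ a‖ ≤ 1 / (5 * κ) ∧ ξ a + S (ξ a) = η a ∧
        ∀ ξ' : B, ‖ξ'‖ ≤ 1 / (5 * κ) → ξ' + S ξ' = η a → ξ' = ξ a := by
  have hκ0 : 0 < κ := by linarith
  have hm0 : (m : WithTop ℕ∞) ≠ 0 := by exact_mod_cast Nat.one_le_iff_ne_zero.mp hm
  have hK : (2 / 5 : ℝ≥0) < 1 := by norm_num
  have hlip : LipschitzOnWith (2 / 5) S (closedBall 0 (1 / (5 * κ))) :=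
    lipschitzOnWith_closedBall_of_quadratic hquad hκ0.le
      ((div_le_one (by positivity)).2 (by linarith)) (by field_simp; norm_num)
  choose! ξ hξr hξeq using fun a (ha : a ∈ U) ↦
    exists_add_eq_of_quadratic hquad hκ hS0 hlip hK (hηsmall a ha)
  have huniq : ∀ a ∈ U, ∀ x ∈ closedBall (0 : B) (1 / (5 * κ)), x + S x = η a → x = ξ a :=
    fun a ha x hx hxa ↦ hlip.eq_of_add_eq_add hK hx (ball_subset_closedBall (hξr a ha))
      (hxa.trans (hξeq a ha).symm)
  refine ⟨ξ, fun a ha ↦ ContDiffAt.contDiffWithinAt ?_,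
    fun a ha ↦ ⟨(mem_ball_zero_iff.1 (hξr a ha)).le, hξeq a ha,
      fun x hx ↦ huniq a ha x (mem_closedBall_zero_iff.2 hx)⟩⟩
  have hball : closedBall (0 : B) (1 / (5 * κ)) ∈ 𝓝 (ξ a) := closedBall_mem_nhds_of_mem (hξr a ha)
  obtain ⟨f', hf'⟩ :=
    hlip.exists_hasFDerivAt_id_add hK hball ((hS.differentiable hm0).differentiableAt)
  exact contDiffAt_of_eventually_unique_solution (contDiff_id.add hS).contDiffAt hf' hm0
    (hη.contDiffAt (hU.mem_nhds ha)) (hξeq a ha) hball (eventually_of_mem (hU.mem_nhds ha) huniq)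
end

section
/- Let μ > 0 and let f : [0, ∞) → ℝ be a twice differentiable function such that f(t) ≥ 0 for all t ≥ 0, f''(t) ≥ 4μ²·f(t) for all t ≥ 0, and f(t) → 0 as t → ∞. Then f(t) ≤ f(0)·e^{−2μt} for all t ≥ 0. -/
/-! Write `f'' - k²f = (D - k)(D + k)f` with `k = 2μ`. Since `(D - k)(f' + kf) ≥ 0`, the function
`(f' + kf)e^{-kt}` is nondecreasing; so if `f' + kf` were positive at some point it would stay
`≥ c > 0` from there on, which forces `f ≥ c/k + O(e^{-kt})`, contradicting `f → 0`. Hence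
`(D + k)f ≤ 0`, i.e. `f e^{kt}` is nonincreasing. -/

open Set Filter Real Topology

theorem Convex.monotoneOn_of_hasDerivWithinAt_nonneg {D : Set ℝ} (hD : Convex ℝ D)
    {g g' : ℝ → ℝ} (hg : ∀ x ∈ D, HasDerivWithinAt g (g' x) D x) (hg' : ∀ x ∈ D, 0 ≤ g' x) :
    MonotoneOn g D :=
  _root_.monotoneOn_of_hasDerivWithinAt_nonneg hD (fun x hx => (hg x hx).continuousWithinAt)
    (fun x hx => (hg x (interior_subset hx)).mono interior_subset)
    (fun x hx => hg' x (interior_subset hx))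

theorem monotoneOn_mul_exp_neg_of_mul_le_deriv {a k : ℝ} {g g' : ℝ → ℝ}
    (hg : ∀ t ∈ Ici a, HasDerivWithinAt g (g' t) (Ici a) t)
    (hle : ∀ t ∈ Ici a, k * g t ≤ g' t) :
    MonotoneOn (fun t => g t * exp (-(k * t))) (Ici a) := by
  refine (convex_Ici a).monotoneOn_of_hasDerivWithinAt_nonneg
    (g' := fun t => (g' t - k * g t) * exp (-(k * t))) (fun t ht => ?_)
    (fun t ht => mul_nonneg (sub_nonneg.2 (hle t ht)) (exp_pos _).le)
  have hexp : HasDerivAt (fun t => exp (-(k * t))) (-k * exp (-(k * t))) t := by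
    simpa [mul_comm] using ((hasDerivAt_id t).const_mul k).neg.exp
  exact ((hg t ht).mul hexp.hasDerivWithinAt).congr_deriv (by ring)

theorem nonpos_of_le_deriv_add_mul {a k c : ℝ} (hk : 0 < k) {f f' : ℝ → ℝ}
    (hf : ∀ t ∈ Ici a, HasDerivWithinAt f (f' t) (Ici a) t)
    (hlim : Tendsto f atTop (𝓝 0)) (hc : ∀ t ∈ Ici a, c ≤ f' t + k * f t) : c ≤ 0 := by
  have hmono : MonotoneOn (fun t => (f t - c / k) * exp (-(-k * t))) (Ici a) :=
    monotoneOn_mul_exp_neg_of_mul_le_deriv (fun t ht => (hf t ht).sub_const _) fun t ht => by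
      have := hc t ht
      field_simp
      linarith
  set C := (f a - c / k) * exp (k * a)
  have hlower : ∀ t ∈ Ici a, c / k + C * exp (-(k * t)) ≤ f t := by
    intro t ht
    have h := hmono self_mem_Ici ht ht
    simp only [neg_mul, neg_neg] at h
    calc c / k + C * exp (-(k * t))
        ≤ c / k + (f t - c / k) * exp (k * t) * exp (-(k * t)) := by gcongr
      _ = f t := by rw [mul_assoc, ← exp_add, add_neg_cancel, exp_zero]; ring
  have hbound : Tendsto (fun t => c / k + C * exp (-(k * t))) atTop (𝓝 (c / k)) := by
    have hdecay := tendsto_exp_neg_atTop_nhds_zero.comp (tendsto_id.const_mul_atTop hk)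
    simpa using (hdecay.const_mul C).const_add (c / k)
  have := le_of_tendsto_of_tendsto hbound hlim (eventually_atTop.2 ⟨a, hlower⟩)
  simpa using (div_le_iff₀ hk).1 this

theorem le_mul_exp_neg_of_sq_mul_le_deriv2 {a k : ℝ} (hk : 0 < k) {f f' f'' : ℝ → ℝ}
    (hf : ∀ t ∈ Ici a, HasDerivWithinAt f (f' t) (Ici a) t)
    (hf' : ∀ t ∈ Ici a, HasDerivWithinAt f' (f'' t) (Ici a) t)
    (hineq : ∀ t ∈ Ici a, k ^ 2 * f t ≤ f'' t) (hlim : Tendsto f atTop (𝓝 0)) :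
    ∀ t ∈ Ici a, f t ≤ f a * exp (-(k * (t - a))) := by
  have hu : MonotoneOn (fun t => (f' t + k * f t) * exp (-(k * t))) (Ici a) :=
    monotoneOn_mul_exp_neg_of_mul_le_deriv (fun t ht => (hf' t ht).add ((hf t ht).const_mul k))
      fun t ht => by linear_combination hineq t ht
  have hfirst : ∀ s ∈ Ici a, f' s + k * f s ≤ 0 := by
    intro s hs
    by_contra! hpos
    refine (nonpos_of_le_deriv_add_mul hk (a := s)
      (fun t ht => (hf t (mem_Ici.2 (hs.trans ht))).mono (Ici_subset_Ici.2 hs)) hlim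
      (fun t ht => ?_)).not_gt hpos
    have hst := hu hs (mem_Ici.2 (hs.trans ht)) ht
    refine le_of_mul_le_mul_right ?_ (exp_pos (-(k * t)))
    calc (f' s + k * f s) * exp (-(k * t)) ≤ (f' s + k * f s) * exp (-(k * s)) := by
          gcongr; exact ht
      _ ≤ _ := hst
  have hanti : MonotoneOn (fun t => -f t * exp (-(-k * t))) (Ici a) :=
    monotoneOn_mul_exp_neg_of_mul_le_deriv (fun t ht => (hf t ht).neg)
      fun t ht => by linarith [hfirst t ht]
  intro t ht
  have h := hanti self_mem_Ici ht ht
  simp only [neg_mul, neg_neg, neg_le_neg_iff] at h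
  calc f t = f t * exp (k * t) * exp (-(k * t)) := by
        rw [mul_assoc, ← exp_add, add_neg_cancel, exp_zero, mul_one]
    _ ≤ f a * exp (k * a) * exp (-(k * t)) := by gcongr
    _ = f a * exp (-(k * (t - a))) := by rw [mul_assoc, ← exp_add]; ring_nf

theorem stmt4_general (μ : ℝ) (hμ : 0 < μ) (f f' f'' : ℝ → ℝ)
    (hf : ∀ t ∈ Set.Ici (0 : ℝ), HasDerivWithinAt f (f' t) (Set.Ici 0) t)
    (hf' : ∀ t ∈ Set.Ici (0 : ℝ), HasDerivWithinAt f' (f'' t) (Set.Ici 0) t)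
    (hineq : ∀ t ≥ (0 : ℝ), 4 * μ ^ 2 * f t ≤ f'' t)
    (hlim : Filter.Tendsto f Filter.atTop (nhds 0)) :
    ∀ t ≥ (0 : ℝ), f t ≤ f 0 * Real.exp (-(2 * μ * t)) := by
  intro t ht
  simpa using le_mul_exp_neg_of_sq_mul_le_deriv2 (by positivity : 0 < 2 * μ) hf hf'
    (fun s hs => by linear_combination hineq s hs) hlim t ht

/-- Differential inequality comparison (key step in the proof of Lemma 2.2 of the
paper): a nonnegative, twice differentiable function on `[0,∞)` with
`f'' ≥ 4μ²·f` and `f(t) → 0` at infinity satisfies `f(t) ≤ f(0)·e^(-2μt)`. -/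
theorem stmt4 (μ : ℝ) (hμ : 0 < μ) (f f' f'' : ℝ → ℝ)
    (hf : ∀ t ∈ Set.Ici (0 : ℝ), HasDerivWithinAt f (f' t) (Set.Ici 0) t)
    (hf' : ∀ t ∈ Set.Ici (0 : ℝ), HasDerivWithinAt f' (f'' t) (Set.Ici 0) t)
    (hpos : ∀ t ≥ (0 : ℝ), 0 ≤ f t)
    (hineq : ∀ t ≥ (0 : ℝ), 4 * μ ^ 2 * f t ≤ f'' t)
    (hlim : Filter.Tendsto f Filter.atTop (nhds 0)) :
    ∀ t ≥ (0 : ℝ), f t ≤ f 0 * Real.exp (-(2 * μ * t)) :=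
  stmt4_general μ hμ f f' f'' hf hf' hineq hlim
end
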